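/- Let δ0, δ1, δ2 > 0, λ1 > 0, and let 0 < λ2 < λ2' satisfy λ1·λ2' < 1. Let (θ1, θ2) ∈ (0,∞)² be the unique equilibrium premium pair for the parameters (δ0, δ1, δ2, λ1, λ2), and let (θ1', θ2') ∈ (0,∞)² be the unique equilibrium premium pair for the parameters (δ0, δ1, δ2, λ1, λ2'). Then θ1' < θ1 and θ2' < θ2; that is, both reinsurers' equilibrium premium loadings are strictly decreasing in the competition degree λ2. -/
import Mathlib


/-- The reinsurer's best-response function with insurer risk aversion `δ0`,
reinsurer risk aversion `δ`, and competitor's competition degree `lam`. -/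
noncomputable def phi (δ0 δ lam x : ℝ) : ℝ :=
  ((δ0 + 2 * δ) * x^2 + (1 + lam) * δ0 * δ * x) /
    (2 * x^2 + ((1 + 2 * lam) * δ0 + 2 * lam * δ) * x + lam * (1 + lam) * δ0 * δ)

private lemma den_pos {δ0 δ lam x : ℝ} (hδ0 : 0 < δ0) (hδ : 0 < δ) (hlam : 0 < lam)
    (hx : 0 < x) :
    0 < 2 * x^2 + ((1 + 2 * lam) * δ0 + 2 * lam * δ) * x + lam * (1 + lam) * δ0 * δ := by
  have h1 : (0:ℝ) < (1 + 2 * lam) * δ0 + 2 * lam * δ := by positivity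
  positivity

private lemma phi_mono {δ0 δ lam x y : ℝ} (hδ0 : 0 < δ0) (hδ : 0 < δ) (hlam : 0 < lam)
    (hx : 0 < x) (hxy : x < y) : phi δ0 δ lam x < phi δ0 δ lam y := by
  have hy : 0 < y := hx.trans hxy
  unfold phi
  rw [div_lt_div_iff₀ (den_pos hδ0 hδ hlam hx) (den_pos hδ0 hδ hlam hy)]
  have hF : (0:ℝ) < 4*δ^2*lam*x*y + 4*δ0*δ*lam*x*y + 2*δ0*δ^2*lam*(1+lam)*(x+y)
      + δ0^2*x*y + 2*δ0^2*lam*x*y + δ0^2*δ*lam*(1+lam)*(x+y) + δ0^2*δ^2*lam*(1+lam)^2 := by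
    positivity
  nlinarith [mul_pos (sub_pos.2 hxy) hF]

private lemma phi_ratio {δ0 δ lam x y : ℝ} (hδ0 : 0 < δ0) (hδ : 0 < δ) (hlam : 0 < lam)
    (hx : 0 < x) (hxy : x < y) : x * phi δ0 δ lam y < y * phi δ0 δ lam x := by
  have hy : 0 < y := hx.trans hxy
  unfold phi
  rw [← mul_div_assoc, ← mul_div_assoc,
    div_lt_div_iff₀ (den_pos hδ0 hδ hlam hy) (den_pos hδ0 hδ hlam hx)]
  have hF : (0:ℝ) < 4*δ*x^2*y^2 + 2*δ0*x^2*y^2 + 2*δ0*δ*(1+lam)*x*y*(x+y)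
      + δ0^2*δ*(1+lam)^2*x*y := by positivity
  nlinarith [mul_pos (sub_pos.2 hxy) hF]

private lemma phi_anti {δ0 δ lam lam' x : ℝ} (hδ0 : 0 < δ0) (hδ : 0 < δ) (hlam : 0 < lam)
    (hll : lam < lam') (hx : 0 < x) : phi δ0 δ lam' x < phi δ0 δ lam x := by
  have hlam' : 0 < lam' := hlam.trans hll
  unfold phi
  rw [div_lt_div_iff₀ (den_pos hδ0 hδ hlam' hx) (den_pos hδ0 hδ hlam hx)]
  have hF : (0:ℝ) < 4*δ^2*x^3 + 4*δ0*δ*x^3 + δ0*δ^2*x^2*(4+2*(lam+lam'))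
      + 2*δ0^2*x^3 + δ0^2*δ*x^2*(2+(lam+lam')) + δ0^2*δ^2*x*(1+lam+lam'+lam*lam') := by
    positivity
  nlinarith [mul_pos (sub_pos.2 hll) hF]

theorem stmt_13 (δ0 δ1 δ2 lam1 : ℝ) (hδ0 : 0 < δ0) (hδ1 : 0 < δ1) (hδ2 : 0 < δ2)
    (hlam1 : 0 < lam1) (lam2 lam2' : ℝ) (hlam2 : 0 < lam2) (hlt : lam2 < lam2')
    (hprod : lam1 * lam2' < 1)
    (θ1 θ2 θ1' θ2' : ℝ) (hθ1 : 0 < θ1) (hθ2 : 0 < θ2) (hθ1' : 0 < θ1') (hθ2' : 0 < θ2')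
    (hfix1 : θ1 = phi δ0 δ1 lam2 θ2) (hfix2 : θ2 = phi δ0 δ2 lam1 θ1)
    (hfix1' : θ1' = phi δ0 δ1 lam2' θ2') (hfix2' : θ2' = phi δ0 δ2 lam1 θ1') :
    θ1' < θ1 ∧ θ2' < θ2 := by
  have h1 : θ1' < θ1 := by
    by_contra h
    push_neg at h
    rcases eq_or_lt_of_le h with heq | hlt1
    · -- θ1 = θ1', hence θ2 = θ2', but then θ1' < θ1
      have h2 : θ2 = θ2' := by rw [hfix2, hfix2', heq]
      have : θ1' < θ1 := by
        rw [hfix1, hfix1', h2]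
        exact phi_anti hδ0 hδ1 hlam2 hlt hθ2'
      linarith
    · -- θ1 < θ1', hence θ2 < θ2'
      have h2 : θ2 < θ2' := by
        rw [hfix2, hfix2']
        exact phi_mono hδ0 hδ2 hlam1 hθ1 hlt1
      -- ratio lemma on φ₂ : θ1 * θ2' < θ1' * θ2
      have ha : θ1 * θ2' < θ1' * θ2 := by
        rw [hfix2, hfix2']
        exact phi_ratio hδ0 hδ2 hlam1 hθ1 hlt1
      -- ratio lemma on φ₁ (with lam2) plus anti in lam : θ2 * θ1' < θ2' * θ1
      have hb : θ2 * θ1' < θ2' * θ1 := by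
        have hb1 : θ2 * θ1' < θ2 * phi δ0 δ1 lam2 θ2' := by
          have := phi_anti hδ0 hδ1 hlam2 hlt hθ2'
          rw [hfix1'] at *
          exact (mul_lt_mul_iff_right₀ hθ2).2 this
        have hb2 : θ2 * phi δ0 δ1 lam2 θ2' < θ2' * phi δ0 δ1 lam2 θ2 :=
          phi_ratio hδ0 hδ1 hlam2 hθ2 h2
        rw [hfix1]
        exact hb1.trans hb2
      nlinarith
  have h2 : θ2' < θ2 := by
    rw [hfix2, hfix2']
    exact phi_mono hδ0 hδ2 hlam1 hθ1' h1
  exact ⟨h1, h2⟩
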